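/- Let F0∈ℝ and let ψ,u,v∥,ρ be smooth on {R>0}×ℝ_φ×ℝ_Z. Set B := ((1/R)∂_Zψ)e_R+(F0/R)e_φ+(−(1/R)∂_Rψ)e_Z and v := (−R∂_Zu)e_R+(R∂_Ru)e_Z + v∥B. Then the advection-compression combination satisfies v·∇ρ + ρ∇·v = −R[ρ,u] − 2ρ∂_Zu + (v∥F0/R²)∂_φρ + (v∥/R)[ρ,ψ] + (ρ/R)[v∥,ψ] + (ρF0/R²)∂_φv∥; equivalently, any ρ with ∂_tρ = −v·∇ρ − ρ∇·v satisfies ∂_tρ = R[ρ,u] + 2ρ∂_Zu − (v∥F0/R²)∂_φρ − (v∥/R)[ρ,ψ] − (ρ/R)[v∥,ψ] − (ρF0/R²)∂_φv∥. -/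

import Mathlib

/-! The advection term `v·∇ρ` is pure algebra once `v` is written out. For the compression
term, `∇·(-R∇u×e_φ) = -2∂_Z u` and `∇·(v∥B) = B·∇v∥`, because `∇·B = 0`; both facts reduce to
the symmetry of the mixed partials `∂_R∂_Z` of the smooth functions `u` and `ψ`. -/

noncomputable section
set_option linter.unusedVariables false

open Real

/-- Scalar fields as functions of `(t, R, φ, Z)`. -/
abbrev F4 := ℝ → ℝ → ℝ → ℝ → ℝ

/-- Partial derivative in time `t`. -/
def dT (f : F4) (t R φ Z : ℝ) : ℝ := deriv (fun s => f s R φ Z) t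

/-- Partial derivative in `R`. -/
def dR (f : F4) (t R φ Z : ℝ) : ℝ := deriv (fun r => f t r φ Z) R

/-- Partial derivative in `φ`. -/
def dP (f : F4) (t R φ Z : ℝ) : ℝ := deriv (fun a => f t R a Z) φ

/-- Partial derivative in `Z`. -/
def dZ (f : F4) (t R φ Z : ℝ) : ℝ := deriv (fun z => f t R φ z) Z

/-- Joint smoothness (C^∞) in `(t,R,φ,Z)`. -/
def Smooth4 (f : F4) : Prop :=
  ContDiff ℝ (⊤ : ℕ∞) fun q : ℝ × ℝ × ℝ × ℝ => f q.1 q.2.1 q.2.2.1 q.2.2.2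

/-- Poisson bracket `[a,b] = ∂_R a ∂_Z b − ∂_Z a ∂_R b` (spatial). -/
def pb (a b : F4) (t R φ Z : ℝ) : ℝ :=
  dR a t R φ Z * dZ b t R φ Z - dZ a t R φ Z * dR b t R φ Z

/-- Grad–Shafranov operator `Δ* f = R ∂_R((1/R) ∂_R f) + ∂_ZZ f`. -/
def GS (f : F4) (t R φ Z : ℝ) : ℝ :=
  R * dR (fun s r a z => (1 / r) * dR f s r a z) t R φ Z + dZ (dZ f) t R φ Z

/-- Poloidal Laplacian `Δ_pol f = (1/R) ∂_R(R ∂_R f) + ∂_ZZ f`. -/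
def LapPol (f : F4) (t R φ Z : ℝ) : ℝ :=
  (1 / R) * dR (fun s r a z => r * dR f s r a z) t R φ Z + dZ (dZ f) t R φ Z

/-- Cylindrical divergence `∇·F = (1/R)∂_R(R F_R) + (1/R)∂_φ F_φ + ∂_Z F_Z`. -/
def divC (FR Fφ FZ : F4) (t R φ Z : ℝ) : ℝ :=
  (1 / R) * dR (fun s r a z => r * FR s r a z) t R φ Z + (1 / R) * dP Fφ t R φ Z
    + dZ FZ t R φ Z

/-- Scalar advection `X·∇f = X_R ∂_R f + (X_φ/R) ∂_φ f + X_Z ∂_Z f`. -/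
def advS (XvR XvP XvZ f : F4) (t R φ Z : ℝ) : ℝ :=
  XvR t R φ Z * dR f t R φ Z + XvP t R φ Z / R * dP f t R φ Z + XvZ t R φ Z * dZ f t R φ Z

/-- `e_R`-component of `B = (1/R)∇ψ×e_φ + (F0/R)e_φ`. -/
def BR (ψ : F4) : F4 := fun t R φ Z => (1 / R) * dZ ψ t R φ Z

/-- `e_φ`-component of the magnetic field. -/
def BP (F0 : ℝ) : F4 := fun _ R _ _ => F0 / R

/-- `e_Z`-component of the magnetic field. -/
def BZ (ψ : F4) : F4 := fun t R φ Z => -(1 / R) * dR ψ t R φ Z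

/-- `e_R`-component of `v_pol = −R∇u×e_φ`. -/
def vR (u : F4) : F4 := fun t R φ Z => -R * dZ u t R φ Z

/-- `e_Z`-component of `v_pol = −R∇u×e_φ`. -/
def vZ (u : F4) : F4 := fun t R φ Z => R * dR u t R φ Z

/-- The zero field. -/
def zeroF : F4 := fun _ _ _ _ => 0

/-- `∇_pol a · ∇_pol b`. -/
def gdot (a b : F4) : F4 := fun t R φ Z =>
  dR a t R φ Z * dR b t R φ Z + dZ a t R φ Z * dZ b t R φ Z

/-- `|B|² = (F0² + (∂_Rψ)² + (∂_Zψ)²)/R²`. -/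
def B2 (F0 : ℝ) (ψ : F4) : F4 := fun t R φ Z =>
  (F0 ^ 2 + (dR ψ t R φ Z) ^ 2 + (dZ ψ t R φ Z) ^ 2) / R ^ 2

/-- `|B_pol|² = ((∂_Rψ)² + (∂_Zψ)²)/R²`. -/
def Bpol2 (ψ : F4) : F4 := fun t R φ Z =>
  ((dR ψ t R φ Z) ^ 2 + (dZ ψ t R φ Z) ^ 2) / R ^ 2

/-- `ρ̂ = R²ρ`. -/
def rh (ρ : F4) : F4 := fun t R φ Z => R ^ 2 * ρ t R φ Z

/-- `|∇_pol u|²`. -/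
def gradu2 (u : F4) : F4 := fun t R φ Z => (dR u t R φ Z) ^ 2 + (dZ u t R φ Z) ^ 2

/-- `e_R`-component of the total velocity `v = v_pol + v∥B`. -/
def vtotR (ψ u vpar : F4) : F4 := fun t R φ Z =>
  vR u t R φ Z + vpar t R φ Z * BR ψ t R φ Z

/-- `e_φ`-component of the total velocity. -/
def vtotP (F0 : ℝ) (vpar : F4) : F4 := fun t R φ Z => vpar t R φ Z * BP F0 t R φ Z

/-- `e_Z`-component of the total velocity. -/
def vtotZ (ψ u vpar : F4) : F4 := fun t R φ Z =>
  vZ u t R φ Z + vpar t R φ Z * BZ ψ t R φ Z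

def uncurry4 (f : F4) (q : ℝ × ℝ × ℝ × ℝ) : ℝ := f q.1 q.2.1 q.2.2.1 q.2.2.2

namespace Smooth4

theorem contDiff_uncurry4 {f : F4} (hf : Smooth4 f) : ContDiff ℝ (⊤ : ℕ∞) (uncurry4 f) := hf

theorem hasDerivAt_comp {f : F4} (hf : Smooth4 f) {γ : ℝ → ℝ × ℝ × ℝ × ℝ}
    {γ' : ℝ × ℝ × ℝ × ℝ} {x : ℝ} (hγ : HasDerivAt γ γ' x) :
    HasDerivAt (uncurry4 f ∘ γ) (fderiv ℝ (uncurry4 f) (γ x) γ') x :=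
  (hf.differentiable (by simp) (γ x)).hasFDerivAt.comp_hasDerivAt x hγ

theorem dR_eq_fderiv {f : F4} (hf : Smooth4 f) (t R φ Z : ℝ) :
    dR f t R φ Z = fderiv ℝ (uncurry4 f) (t, R, φ, Z) (0, 1, 0, 0) :=
  (hf.hasDerivAt_comp <| (hasDerivAt_const R t).prodMk <|
    (hasDerivAt_id R).prodMk <| (hasDerivAt_const R φ).prodMk (hasDerivAt_const R Z)).deriv

theorem dP_eq_fderiv {f : F4} (hf : Smooth4 f) (t R φ Z : ℝ) :
    dP f t R φ Z = fderiv ℝ (uncurry4 f) (t, R, φ, Z) (0, 0, 1, 0) :=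
  (hf.hasDerivAt_comp <| (hasDerivAt_const φ t).prodMk <|
    (hasDerivAt_const φ R).prodMk <| (hasDerivAt_id φ).prodMk (hasDerivAt_const φ Z)).deriv

theorem dZ_eq_fderiv {f : F4} (hf : Smooth4 f) (t R φ Z : ℝ) :
    dZ f t R φ Z = fderiv ℝ (uncurry4 f) (t, R, φ, Z) (0, 0, 0, 1) :=
  (hf.hasDerivAt_comp <| (hasDerivAt_const Z t).prodMk <|
    (hasDerivAt_const Z R).prodMk <| (hasDerivAt_const Z φ).prodMk (hasDerivAt_id Z)).deriv

theorem hasDerivAt_dR {f : F4} (hf : Smooth4 f) (t R φ Z : ℝ) :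
    HasDerivAt (fun r => f t r φ Z) (dR f t R φ Z) R := by
  rw [hf.dR_eq_fderiv]
  exact hf.hasDerivAt_comp <| (hasDerivAt_const R t).prodMk <|
    (hasDerivAt_id R).prodMk <| (hasDerivAt_const R φ).prodMk (hasDerivAt_const R Z)

theorem hasDerivAt_dP {f : F4} (hf : Smooth4 f) (t R φ Z : ℝ) :
    HasDerivAt (fun a => f t R a Z) (dP f t R φ Z) φ := by
  rw [hf.dP_eq_fderiv]
  exact hf.hasDerivAt_comp <| (hasDerivAt_const φ t).prodMk <|
    (hasDerivAt_const φ R).prodMk <| (hasDerivAt_id φ).prodMk (hasDerivAt_const φ Z)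

theorem hasDerivAt_dZ {f : F4} (hf : Smooth4 f) (t R φ Z : ℝ) :
    HasDerivAt (fun z => f t R φ z) (dZ f t R φ Z) Z := by
  rw [hf.dZ_eq_fderiv]
  exact hf.hasDerivAt_comp <| (hasDerivAt_const Z t).prodMk <|
    (hasDerivAt_const Z R).prodMk <| (hasDerivAt_const Z φ).prodMk (hasDerivAt_id Z)

theorem uncurry4_dR {f : F4} (hf : Smooth4 f) :
    uncurry4 (dR f) = fun q => fderiv ℝ (uncurry4 f) q (0, 1, 0, 0) :=
  funext fun q => hf.dR_eq_fderiv q.1 q.2.1 q.2.2.1 q.2.2.2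

theorem uncurry4_dZ {f : F4} (hf : Smooth4 f) :
    uncurry4 (dZ f) = fun q => fderiv ℝ (uncurry4 f) q (0, 0, 0, 1) :=
  funext fun q => hf.dZ_eq_fderiv q.1 q.2.1 q.2.2.1 q.2.2.2

theorem contDiff_fderiv_apply {f : F4} (hf : Smooth4 f) (v : ℝ × ℝ × ℝ × ℝ) :
    ContDiff ℝ (⊤ : ℕ∞) fun q => fderiv ℝ (uncurry4 f) q v :=
  (hf.contDiff_uncurry4.fderiv_right (by simp)).clm_apply contDiff_const

protected theorem dR {f : F4} (hf : Smooth4 f) : Smooth4 (dR f) := by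
  show ContDiff ℝ _ (uncurry4 (dR f))
  exact hf.uncurry4_dR ▸ hf.contDiff_fderiv_apply _

protected theorem dZ {f : F4} (hf : Smooth4 f) : Smooth4 (dZ f) := by
  show ContDiff ℝ _ (uncurry4 (dZ f))
  exact hf.uncurry4_dZ ▸ hf.contDiff_fderiv_apply _

theorem fderiv_fderiv_apply {f : F4} (hf : Smooth4 f) (q v w : ℝ × ℝ × ℝ × ℝ) :
    fderiv ℝ (fun q => fderiv ℝ (uncurry4 f) q w) q v
      = fderiv ℝ (fderiv ℝ (uncurry4 f)) q v w := by
  rw [fderiv_clm_apply ((hf.contDiff_uncurry4.fderiv_right (m := (⊤ : ℕ∞)) (by simp)).differentiable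
    (by simp) q) (differentiableAt_const w)]
  simp

theorem dR_dZ_comm {f : F4} (hf : Smooth4 f) (t R φ Z : ℝ) :
    dR (dZ f) t R φ Z = dZ (dR f) t R φ Z := by
  rw [hf.dZ.dR_eq_fderiv, hf.dR.dZ_eq_fderiv, hf.uncurry4_dZ, hf.uncurry4_dR,
    hf.fderiv_fderiv_apply, hf.fderiv_fderiv_apply]
  exact hf.contDiff_uncurry4.contDiffAt.isSymmSndFDerivAt
    (by rw [minSmoothness_of_isRCLikeNormedField]; exact WithTop.coe_le_coe.mpr le_top) _ _

end Smooth4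

theorem advS_vtot (F0 : ℝ) (ψ u vpar ρ : F4) (t : ℝ) {R : ℝ} (hR : R ≠ 0) (φ Z : ℝ) :
    advS (vtotR ψ u vpar) (vtotP F0 vpar) (vtotZ ψ u vpar) ρ t R φ Z
      = -R * pb ρ u t R φ Z + (vpar t R φ Z * F0 / R ^ 2) * dP ρ t R φ Z
        + (vpar t R φ Z / R) * pb ρ ψ t R φ Z := by
  simp only [advS, vtotR, vtotP, vtotZ, vR, vZ, BR, BP, BZ, pb]
  field_simp
  ring

theorem dR_mul_vtotR {ψ u vpar : F4} (hψ : Smooth4 ψ) (hu : Smooth4 u) (hv : Smooth4 vpar)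
    (t : ℝ) {R : ℝ} (hR : R ≠ 0) (φ Z : ℝ) :
    dR (fun s r a z => r * vtotR ψ u vpar s r a z) t R φ Z
      = -(2 * R * dZ u t R φ Z + R ^ 2 * dR (dZ u) t R φ Z)
        + (dR vpar t R φ Z * dZ ψ t R φ Z + vpar t R φ Z * dR (dZ ψ) t R φ Z) := by
  have hcancel : (fun r => r * vtotR ψ u vpar t r φ Z)
      =ᶠ[nhds R] fun r => -(r ^ 2 * dZ u t r φ Z) + vpar t r φ Z * dZ ψ t r φ Z := by
    filter_upwards [eventually_ne_nhds hR] with r hr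
    simp only [vtotR, vR, BR]
    field_simp
  have hderiv : HasDerivAt (fun r => -(r ^ 2 * dZ u t r φ Z) + vpar t r φ Z * dZ ψ t r φ Z)
      (-(2 * R * dZ u t R φ Z + R ^ 2 * dR (dZ u) t R φ Z)
        + (dR vpar t R φ Z * dZ ψ t R φ Z + vpar t R φ Z * dR (dZ ψ) t R φ Z)) R := by
    refine ((((hasDerivAt_pow 2 R).mul (hu.dZ.hasDerivAt_dR t R φ Z)).neg).add
      ((hv.hasDerivAt_dR t R φ Z).mul (hψ.dZ.hasDerivAt_dR t R φ Z))).congr_deriv ?_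
    norm_num
  exact hcancel.deriv_eq.trans hderiv.deriv

theorem dP_vtotP (F0 : ℝ) {vpar : F4} (hv : Smooth4 vpar) (t R φ Z : ℝ) :
    dP (vtotP F0 vpar) t R φ Z = dP vpar t R φ Z * (F0 / R) :=
  ((hv.hasDerivAt_dP t R φ Z).mul_const (F0 / R)).deriv

theorem dZ_vtotZ {ψ u vpar : F4} (hψ : Smooth4 ψ) (hu : Smooth4 u) (hv : Smooth4 vpar)
    (t R φ Z : ℝ) :
    dZ (vtotZ ψ u vpar) t R φ Z
      = R * dZ (dR u) t R φ Z
        + (dZ vpar t R φ Z * (-(1 / R) * dR ψ t R φ Z)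
          + vpar t R φ Z * (-(1 / R) * dZ (dR ψ) t R φ Z)) :=
  (((hu.dR.hasDerivAt_dZ t R φ Z).const_mul R).add
    ((hv.hasDerivAt_dZ t R φ Z).mul ((hψ.dR.hasDerivAt_dZ t R φ Z).const_mul (-(1 / R))))).deriv

theorem divC_vtot (F0 : ℝ) {ψ u vpar : F4} (hψ : Smooth4 ψ) (hu : Smooth4 u) (hv : Smooth4 vpar)
    (t : ℝ) {R : ℝ} (hR : R ≠ 0) (φ Z : ℝ) :
    divC (vtotR ψ u vpar) (vtotP F0 vpar) (vtotZ ψ u vpar) t R φ Z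
      = -2 * dZ u t R φ Z + (1 / R) * pb vpar ψ t R φ Z
        + (F0 / R ^ 2) * dP vpar t R φ Z := by
  rw [divC, dR_mul_vtotR hψ hu hv t hR, dP_vtotP F0 hv, dZ_vtotZ hψ hu hv, hu.dR_dZ_comm,
    hψ.dR_dZ_comm, pb]
  field_simp
  ring

theorem advS_add_mul_divC_vtot (F0 : ℝ) {ψ u vpar : F4} (hψ : Smooth4 ψ) (hu : Smooth4 u)
    (hv : Smooth4 vpar) (ρ : F4) (t : ℝ) {R : ℝ} (hR : R ≠ 0) (φ Z : ℝ) :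
    advS (vtotR ψ u vpar) (vtotP F0 vpar) (vtotZ ψ u vpar) ρ t R φ Z
        + ρ t R φ Z * divC (vtotR ψ u vpar) (vtotP F0 vpar) (vtotZ ψ u vpar) t R φ Z
      = -R * pb ρ u t R φ Z - 2 * ρ t R φ Z * dZ u t R φ Z
        + (vpar t R φ Z * F0 / R ^ 2) * dP ρ t R φ Z
        + (vpar t R φ Z / R) * pb ρ ψ t R φ Z
        + (ρ t R φ Z / R) * pb vpar ψ t R φ Z
        + (ρ t R φ Z * F0 / R ^ 2) * dP vpar t R φ Z := by
  rw [advS_vtot F0 ψ u vpar ρ t hR, divC_vtot F0 hψ hu hv t hR]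
  ring

theorem density_advection_compression_general (F0 : ℝ) (ψ u vpar ρ : F4)
    (hψ : Smooth4 ψ) (hu : Smooth4 u) (hv : Smooth4 vpar) :
    (∀ t R φ Z : ℝ, 0 < R →
      advS (vtotR ψ u vpar) (vtotP F0 vpar) (vtotZ ψ u vpar) ρ t R φ Z
        + ρ t R φ Z * divC (vtotR ψ u vpar) (vtotP F0 vpar) (vtotZ ψ u vpar) t R φ Z
      = -R * pb ρ u t R φ Z - 2 * ρ t R φ Z * dZ u t R φ Z
        + (vpar t R φ Z * F0 / R ^ 2) * dP ρ t R φ Z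
        + (vpar t R φ Z / R) * pb ρ ψ t R φ Z
        + (ρ t R φ Z / R) * pb vpar ψ t R φ Z
        + (ρ t R φ Z * F0 / R ^ 2) * dP vpar t R φ Z) ∧
    ((∀ t R φ Z : ℝ, 0 < R →
        dT ρ t R φ Z
          = -advS (vtotR ψ u vpar) (vtotP F0 vpar) (vtotZ ψ u vpar) ρ t R φ Z
            - ρ t R φ Z * divC (vtotR ψ u vpar) (vtotP F0 vpar) (vtotZ ψ u vpar) t R φ Z) →
      ∀ t R φ Z : ℝ, 0 < R →
        dT ρ t R φ Z
          = R * pb ρ u t R φ Z + 2 * ρ t R φ Z * dZ u t R φ Z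
            - (vpar t R φ Z * F0 / R ^ 2) * dP ρ t R φ Z
            - (vpar t R φ Z / R) * pb ρ ψ t R φ Z
            - (ρ t R φ Z / R) * pb vpar ψ t R φ Z
            - (ρ t R φ Z * F0 / R ^ 2) * dP vpar t R φ Z) := by
  have key := fun t R φ Z (hR : 0 < R) ↦
    advS_add_mul_divC_vtot F0 hψ hu hv ρ t hR.ne' φ Z
  refine ⟨key, fun hρ t R φ Z hR ↦ ?_⟩
  rw [hρ t R φ Z hR]
  linarith [key t R φ Z hR]

/-- the advection–compression combination for the density, and the
resulting evolution form of the density equation. -/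
theorem density_advection_compression (F0 : ℝ) (ψ u vpar ρ : F4)
    (hψ : Smooth4 ψ) (hu : Smooth4 u) (hv : Smooth4 vpar) (hρ : Smooth4 ρ) :
    (∀ t R φ Z : ℝ, 0 < R →
      advS (vtotR ψ u vpar) (vtotP F0 vpar) (vtotZ ψ u vpar) ρ t R φ Z
        + ρ t R φ Z * divC (vtotR ψ u vpar) (vtotP F0 vpar) (vtotZ ψ u vpar) t R φ Z
      = -R * pb ρ u t R φ Z - 2 * ρ t R φ Z * dZ u t R φ Z
        + (vpar t R φ Z * F0 / R ^ 2) * dP ρ t R φ Z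
        + (vpar t R φ Z / R) * pb ρ ψ t R φ Z
        + (ρ t R φ Z / R) * pb vpar ψ t R φ Z
        + (ρ t R φ Z * F0 / R ^ 2) * dP vpar t R φ Z) ∧
    ((∀ t R φ Z : ℝ, 0 < R →
        dT ρ t R φ Z
          = -advS (vtotR ψ u vpar) (vtotP F0 vpar) (vtotZ ψ u vpar) ρ t R φ Z
            - ρ t R φ Z * divC (vtotR ψ u vpar) (vtotP F0 vpar) (vtotZ ψ u vpar) t R φ Z) →
      ∀ t R φ Z : ℝ, 0 < R →
        dT ρ t R φ Z
          = R * pb ρ u t R φ Z + 2 * ρ t R φ Z * dZ u t R φ Z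
            - (vpar t R φ Z * F0 / R ^ 2) * dP ρ t R φ Z
            - (vpar t R φ Z / R) * pb ρ ψ t R φ Z
            - (ρ t R φ Z / R) * pb vpar ψ t R φ Z
            - (ρ t R φ Z * F0 / R ^ 2) * dP vpar t R φ Z) :=
  density_advection_compression_general F0 ψ u vpar ρ hψ hu hv
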